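/- Let L ∈ Σ[∂] be monic of order n in normal form with constants C of characteristic zero. For every m ∈ ℕ there is an isomorphism of C-vector spaces V_m ≅ Z_m(L) / C_m[L], where V_m is the space of constant solutions of the homogeneous system hGD_{n,m}(L), Z_m(L) is the space of elements of Z(L) of order ≤ m, and C_m[L] is the space of polynomials in L of order ≤ m. -/

import Mathlib

open scoped Classical
noncomputable section

variable {R : Type} [Ring R]

/-- Left multiplication by `a` as an additive endomorphism of `R`. -/
def mulOp (a : R) : AddMonoid.End R := AddMonoidHom.mulLeft a

/-- The derivation as an additive endomorphism. -/
def derOp (d : R →+ R) : AddMonoid.End R := d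

/-- `d` satisfies the Leibniz rule. -/
def IsDeriv (d : R →+ R) : Prop := ∀ a b : R, d (a * b) = d a * b + a * d b

/-- Additive group of differential operators of order at most `n`:
sums of terms `a · ∂^i` with `i ≤ n`. -/
def OpLE (d : R →+ R) (n : ℕ) : AddSubgroup (AddMonoid.End R) :=
  AddSubgroup.closure {P | ∃ (a : R) (i : ℕ), i ≤ n ∧ P = mulOp a * derOp d ^ i}

/-- `L` is a differential operator. -/
def IsOp (d : R →+ R) (L : AddMonoid.End R) : Prop := ∃ n, L ∈ OpLE d n

/-- `L` is a differential operator of exact order `n`. -/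
def HasOrd (d : R →+ R) (L : AddMonoid.End R) (n : ℕ) : Prop :=
  L ∈ OpLE d n ∧ ∀ k, L ∈ OpLE d k → n ≤ k

/-- `L` is a monic differential operator of order `n`. -/
def MonicOrd (d : R →+ R) (L : AddMonoid.End R) (n : ℕ) : Prop :=
  HasOrd d L n ∧ L - derOp d ^ n ∈ OpLE d (n - 1)

/-- The centralizer of `L` in the ring of differential operators. -/
def Cent (d : R →+ R) (L : AddMonoid.End R) : Set (AddMonoid.End R) :=
  {A | IsOp d A ∧ L * A = A * L}

/-- Polynomials in `L` with constant coefficients. -/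
def CPoly (d : R →+ R) (L : AddMonoid.End R) : Set (AddMonoid.End R) :=
  {P | ∃ p : Polynomial R, (∀ k, d (p.coeff k) = 0) ∧
      P = ∑ i ∈ Finset.range (p.natDegree + 1), mulOp (p.coeff i) * L ^ i}

/-- The level of `L`: smallest order of an element of `Z(L) \ C[L]`. -/
def Level (d : R →+ R) (L : AddMonoid.End R) (M : ℕ) : Prop :=
  (∃ Q ∈ Cent d L, Q ∉ CPoly d L ∧ HasOrd d Q M) ∧
  ∀ Q ∈ Cent d L, Q ∉ CPoly d L → ∀ q, HasOrd d Q q → M ≤ q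

/-- The index set `J_{n,m} = {1, ..., m} \\ nℤ`. -/
def Jset (n m : ℕ) : Finset ℕ := (Finset.range (m + 1)).filter (fun j => ¬ (n ∣ j))

/-- The operator `∑_{j ∈ J} c_j · B_j` associated to a coefficient vector `c`. -/
def theta {R : Type} [Ring R] (c : ℕ → R) (B : ℕ → AddMonoid.End R) (J : Finset ℕ) :
    AddMonoid.End R :=
  ∑ j ∈ J, mulOp (c j) * B j

/-- `V_m`: the constant solutions of the homogeneous system `hGD_{n,m}(L)`, i.e. the
constant coefficient vectors `c` supported on `J_{n,m}` such that
`∑_{j ∈ J_{n,m}} c_j B_j` commutes with `L`. -/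
def VmSet {R : Type} [Ring R] (d : R →+ R) (L : AddMonoid.End R)
    (B : ℕ → AddMonoid.End R) (n m : ℕ) : Set (ℕ → R) :=
  {c | (∀ j, d (c j) = 0) ∧ (∀ j ∉ Jset n m, c j = 0) ∧
       theta c B (Jset n m) ∈ Cent d L}

/-- `F_m`: the constant solutions of the inhomogeneous system `GD_{n,m}(L)`, i.e. the
constant coefficient vectors `c` supported on `J_{n,m−1}` such that
`B_m + ∑_{j ∈ J_{n,m−1}} c_j B_j` commutes with `L`. -/
def FmSet {R : Type} [Ring R] (d : R →+ R) (L : AddMonoid.End R)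
    (B : ℕ → AddMonoid.End R) (n m : ℕ) : Set (ℕ → R) :=
  {c | (∀ j, d (c j) = 0) ∧ (∀ j ∉ Jset n (m - 1), c j = 0) ∧
       B m + theta c B (Jset n (m - 1)) ∈ Cent d L}

/-!
Write `OpLT d k` for the operators of order `< k`. Over a domain of characteristic zero with
`d ≠ 0` the leading coefficient is well defined: commuting `a ∂^(k+1)` with multiplication by
some `b` with `d b ≠ 0` leaves `(k+1) a (d b) ∂^k` plus lower order terms, so by induction on
`k` no `a ∂^k` with `a ≠ 0` has order `< k`.

For `L = ∂^n + (order ≤ n - 2)` the commutator `[L, Q]` has leading term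
`n (d α) ∂^(m+n-1)` when `Q` has leading term `α ∂^m`; so an operator almost commuting with
`L` has a constant leading coefficient. Subtracting `α L^(m/n)` (if `n ∣ m`) or `α B_m`
lowers the order and keeps almost commutation, hence every such operator of order `≤ m` is a
constant combination of the `L^(j/n)` with `n ∣ j` and the `B_j` with `j ∈ J_{n,m}`. For
`Q ∈ Z(L)` the first part lies in `C[L]`, which is surjectivity. Injectivity compares leading
orders: a nonzero combination of the `B_j` has leading order in `J_{n,m}`, a nonzero
polynomial in `L` one divisible by `n`.
-/

section Filtration

variable {d : R →+ R}

@[simp] lemma mulOp_apply (a x : R) : mulOp a x = a * x := rfl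

lemma mulOp_mul (a b : R) : mulOp (a * b) = mulOp a * mulOp b :=
  AddMonoidHom.ext fun x => mul_assoc a b x

lemma mulOp_add (a b : R) : mulOp (a + b) = mulOp a + mulOp b :=
  AddMonoidHom.ext fun x => add_mul a b x

lemma mulOp_sub (a b : R) : mulOp (a - b) = mulOp a - mulOp b :=
  AddMonoidHom.ext fun x => sub_mul a b x

@[simp] lemma mulOp_zero : mulOp (0 : R) = 0 := AddMonoidHom.ext zero_mul

@[simp] lemma mulOp_one : mulOp (1 : R) = 1 := AddMonoidHom.ext one_mul

lemma mulOp_injective : Function.Injective (mulOp : R → AddMonoid.End R) := fun a b h => by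
  simpa using DFunLike.congr_fun h 1

lemma derOp_mul_mulOp (hd : IsDeriv d) (b : R) :
    derOp d * mulOp b = mulOp (d b) + mulOp b * derOp d :=
  AddMonoidHom.ext fun x => hd b x

lemma ne_zero_of_monicOrd {L : AddMonoid.End R} {n : ℕ} (hn : 1 ≤ n) (hL : MonicOrd d L n) :
    d ≠ 0 := by
  rintro rfl
  have h0 : derOp (0 : R →+ R) ^ n = 0 := zero_pow (by omega)
  have hL' : L ∈ OpLE 0 (n - 1) := by simpa [h0] using hL.2
  have := hL.1.2 _ hL'
  omega

lemma mulOp_mul_derOp_pow_mem_OpLE (a : R) {i n : ℕ} (h : i ≤ n) :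
    mulOp a * derOp d ^ i ∈ OpLE d n :=
  AddSubgroup.subset_closure ⟨a, i, h, rfl⟩

lemma mulOp_mem_OpLE (a : R) (n : ℕ) : mulOp a ∈ OpLE d n := by
  simpa using mulOp_mul_derOp_pow_mem_OpLE (d := d) a (Nat.zero_le n)

lemma derOp_pow_mem_OpLE (n : ℕ) : derOp d ^ n ∈ OpLE d n := by
  simpa using mulOp_mul_derOp_pow_mem_OpLE (d := d) 1 le_rfl

lemma OpLE_mono : Monotone (OpLE d) := fun _ _ h =>
  AddSubgroup.closure_mono fun _ ⟨a, i, hi, hP⟩ => ⟨a, i, hi.trans h, hP⟩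

lemma map_mem_of_mem_OpLE (f : AddMonoid.End R →+ AddMonoid.End R)
    {H : AddSubgroup (AddMonoid.End R)} {n : ℕ}
    (hf : ∀ (a : R) (i : ℕ), i ≤ n → f (mulOp a * derOp d ^ i) ∈ H)
    {A : AddMonoid.End R} (hA : A ∈ OpLE d n) : f A ∈ H :=
  (AddSubgroup.closure_le (K := H.comap f)).2 (by rintro _ ⟨a, i, hi, rfl⟩; exact hf a i hi) hA

lemma mulOp_mul_mem_OpLE (c : R) {n : ℕ} {A : AddMonoid.End R} (hA : A ∈ OpLE d n) :
    mulOp c * A ∈ OpLE d n :=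
  map_mem_of_mem_OpLE (AddMonoidHom.mulLeft (mulOp c)) (fun a i hi => by
    simpa [← mul_assoc, ← mulOp_mul] using mulOp_mul_derOp_pow_mem_OpLE (c * a) hi) hA

lemma mul_derOp_pow_mem_OpLE (j : ℕ) {n : ℕ} {A : AddMonoid.End R} (hA : A ∈ OpLE d n) :
    A * derOp d ^ j ∈ OpLE d (n + j) :=
  map_mem_of_mem_OpLE (AddMonoidHom.mulRight (derOp d ^ j)) (fun a i hi => by
    simpa [mul_assoc, ← pow_add] using mulOp_mul_derOp_pow_mem_OpLE a (by omega)) hA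

lemma derOp_mul_mem_OpLE (hd : IsDeriv d) {n : ℕ} {A : AddMonoid.End R} (hA : A ∈ OpLE d n) :
    derOp d * A ∈ OpLE d (n + 1) :=
  map_mem_of_mem_OpLE (AddMonoidHom.mulLeft (derOp d)) (fun a i hi => by
    simp only [AddMonoidHom.coe_mulLeft]
    rw [← mul_assoc, derOp_mul_mulOp hd, add_mul, mul_assoc, ← pow_succ']
    exact add_mem (mulOp_mul_derOp_pow_mem_OpLE _ (by omega))
      (mulOp_mul_derOp_pow_mem_OpLE _ (by omega))) hA

variable (d) in
def OpLT : ℕ → AddSubgroup (AddMonoid.End R)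
  | 0 => ⊥
  | k + 1 => OpLE d k

@[simp] lemma OpLT_zero : OpLT d 0 = ⊥ := rfl

@[simp] lemma OpLT_succ (k : ℕ) : OpLT d (k + 1) = OpLE d k := rfl

lemma OpLT_eq_OpLE_sub_one {k : ℕ} (hk : 1 ≤ k) : OpLT d k = OpLE d (k - 1) := by
  obtain ⟨k, rfl⟩ := Nat.exists_eq_add_of_le' hk
  rfl

lemma OpLE_le_OpLT {m k : ℕ} (h : m < k) : OpLE d m ≤ OpLT d k := by
  rw [OpLT_eq_OpLE_sub_one (by omega)]
  exact OpLE_mono (by omega)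

lemma OpLT_le_OpLE (k : ℕ) : OpLT d k ≤ OpLE d k := by
  cases k with
  | zero => exact bot_le
  | succ k => exact OpLE_mono k.le_succ

lemma OpLT_mono : Monotone (OpLT d) := fun m k h => by
  cases m with
  | zero => exact bot_le
  | succ m => exact OpLE_le_OpLT h

lemma map_mem_OpLT (f : AddMonoid.End R →+ AddMonoid.End R) (j : ℕ)
    (hf : ∀ k, ∀ A ∈ OpLE d k, f A ∈ OpLE d (k + j)) {k : ℕ} {A : AddMonoid.End R}
    (hA : A ∈ OpLT d k) : f A ∈ OpLT d (k + j) := by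
  cases k with
  | zero => simp_all
  | succ k => simpa [Nat.add_right_comm k 1 j] using hf k A hA

lemma mulOp_mul_mem_OpLT (c : R) {k : ℕ} {A : AddMonoid.End R} (hA : A ∈ OpLT d k) :
    mulOp c * A ∈ OpLT d k :=
  map_mem_OpLT (AddMonoidHom.mulLeft (mulOp c)) 0 (fun _ _ => mulOp_mul_mem_OpLE c) hA

lemma mul_derOp_pow_mem_OpLT (j : ℕ) {k : ℕ} {A : AddMonoid.End R} (hA : A ∈ OpLT d k) :
    A * derOp d ^ j ∈ OpLT d (k + j) :=
  map_mem_OpLT (AddMonoidHom.mulRight (derOp d ^ j)) j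
    (fun _ _ => mul_derOp_pow_mem_OpLE j) hA

lemma derOp_mul_mem_OpLT (hd : IsDeriv d) {k : ℕ} {A : AddMonoid.End R} (hA : A ∈ OpLT d k) :
    derOp d * A ∈ OpLT d (k + 1) :=
  map_mem_OpLT (AddMonoidHom.mulLeft (derOp d)) 1 (fun _ _ => derOp_mul_mem_OpLE hd) hA

variable (d) in
/-- `a` may be `0`, in which case this just says that `A` has order `< k`. -/
def HasLeadingTerm (A : AddMonoid.End R) (a : R) (k : ℕ) : Prop :=
  A - mulOp a * derOp d ^ k ∈ OpLT d k

lemma hasLeadingTerm_mulOp_mul_derOp_pow (a : R) (k : ℕ) :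
    HasLeadingTerm d (mulOp a * derOp d ^ k) a k := by
  simp [HasLeadingTerm]

namespace HasLeadingTerm

variable {A B : AddMonoid.End R} {a b : R} {k : ℕ}

lemma mem_OpLE (h : HasLeadingTerm d A a k) : A ∈ OpLE d k := by
  simpa using add_mem (OpLT_le_OpLE k h) (mulOp_mul_derOp_pow_mem_OpLE a le_rfl)

lemma add_mem_OpLT (h : HasLeadingTerm d A a k) (hB : B ∈ OpLT d k) :
    HasLeadingTerm d (A + B) a k := by
  simpa [HasLeadingTerm, add_sub_right_comm] using add_mem h hB

lemma sub_mem_OpLT (hA : HasLeadingTerm d A a k) (hB : HasLeadingTerm d B a k) :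
    A - B ∈ OpLT d k := by
  simpa using sub_mem hA hB

lemma add (hA : HasLeadingTerm d A a k) (hB : HasLeadingTerm d B b k) :
    HasLeadingTerm d (A + B) (a + b) k := by
  unfold HasLeadingTerm at *
  convert add_mem hA hB using 1
  rw [mulOp_add, add_mul]
  abel

lemma sub (hA : HasLeadingTerm d A a k) (hB : HasLeadingTerm d B b k) :
    HasLeadingTerm d (A - B) (a - b) k := by
  unfold HasLeadingTerm at *
  convert sub_mem hA hB using 1
  rw [mulOp_sub, sub_mul]
  abel

lemma mulOp_mul (c : R) (h : HasLeadingTerm d A a k) :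
    HasLeadingTerm d (mulOp c * A) (c * a) k := by
  unfold HasLeadingTerm
  rw [_root_.mulOp_mul, mul_assoc, ← mul_sub]
  exact mulOp_mul_mem_OpLT c h

lemma mul_derOp_pow (j : ℕ) (h : HasLeadingTerm d A a k) :
    HasLeadingTerm d (A * derOp d ^ j) a (k + j) := by
  simpa [HasLeadingTerm, sub_mul, mul_assoc, ← pow_add] using mul_derOp_pow_mem_OpLT j h

lemma derOp_mul (hd : IsDeriv d) (h : HasLeadingTerm d A a k) :
    HasLeadingTerm d (derOp d * A) a (k + 1) := by
  have hlow : mulOp (d a) * derOp d ^ k ∈ OpLT d (k + 1) :=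
    mulOp_mul_derOp_pow_mem_OpLE _ le_rfl
  unfold HasLeadingTerm at *
  convert add_mem (derOp_mul_mem_OpLT hd h) hlow using 1
  rw [mul_sub, ← mul_assoc, derOp_mul_mulOp hd, pow_succ', add_mul, mul_assoc]
  abel

end HasLeadingTerm

lemma exists_hasLeadingTerm {k : ℕ} {A : AddMonoid.End R} (hA : A ∈ OpLE d k) :
    ∃ a, HasLeadingTerm d A a k := by
  induction hA using AddSubgroup.closure_induction with
  | mem _ h =>
    obtain ⟨b, i, hi, rfl⟩ := h
    rcases hi.lt_or_eq with hi | rfl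
    · exact ⟨0, by simpa [HasLeadingTerm] using
        OpLE_le_OpLT hi (mulOp_mul_derOp_pow_mem_OpLE b le_rfl)⟩
    · exact ⟨b, hasLeadingTerm_mulOp_mul_derOp_pow b i⟩
  | zero => exact ⟨0, by simp [HasLeadingTerm]⟩
  | add _ _ _ _ hA hB =>
    obtain ⟨a, ha⟩ := hA
    obtain ⟨b, hb⟩ := hB
    exact ⟨a + b, ha.add hb⟩
  | neg _ _ hA =>
    obtain ⟨a, ha⟩ := hA
    exact ⟨-a, by simpa using (hasLeadingTerm_mulOp_mul_derOp_pow 0 k).sub ha⟩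

lemma hasLeadingTerm_derOp_pow_mul_mulOp_sub (hd : IsDeriv d) (b : R) (k : ℕ) :
    HasLeadingTerm d (derOp d ^ (k + 1) * mulOp b - mulOp b * derOp d ^ (k + 1))
      ((k + 1) * d b) k := by
  induction k with
  | zero =>
    simp [HasLeadingTerm, derOp_mul_mulOp hd]
  | succ k ih =>
    have key : derOp d ^ (k + 1 + 1) * mulOp b - mulOp b * derOp d ^ (k + 1 + 1)
        = derOp d * (derOp d ^ (k + 1) * mulOp b - mulOp b * derOp d ^ (k + 1))
          + mulOp (d b) * derOp d ^ (k + 1) := by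
      rw [pow_succ' (derOp d) (k + 1), mul_sub, ← mul_assoc (derOp d) (mulOp b),
        derOp_mul_mulOp hd]
      simp only [add_mul, mul_assoc]
      abel
    rw [key]
    convert (ih.derOp_mul hd).add (hasLeadingTerm_mulOp_mul_derOp_pow (d b) (k + 1)) using 1
    push_cast
    rw [add_mul _ 1, one_mul]

end Filtration

section Products

variable {d : R →+ R}

lemma derOp_pow_mul_mulOp_sub_mem (hd : IsDeriv d) (b : R) (i : ℕ) :
    derOp d ^ i * mulOp b - mulOp b * derOp d ^ i ∈ OpLT d i := by
  cases i with
  | zero => simp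
  | succ k => exact (hasLeadingTerm_derOp_pow_mul_mulOp_sub hd b k).mem_OpLE

lemma hasLeadingTerm_mulOp_mul_derOp_pow_mul (hd : IsDeriv d) (a b : R) (i j : ℕ) :
    HasLeadingTerm d (mulOp a * derOp d ^ i * (mulOp b * derOp d ^ j)) (a * b) (i + j) := by
  have key : mulOp a * derOp d ^ i * (mulOp b * derOp d ^ j)
      = mulOp (a * b) * derOp d ^ (i + j)
        + mulOp a * ((derOp d ^ i * mulOp b - mulOp b * derOp d ^ i) * derOp d ^ j) := by
    rw [mulOp_mul, pow_add]
    simp only [mul_sub, sub_mul, mul_assoc]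
    abel
  rw [key]
  exact (hasLeadingTerm_mulOp_mul_derOp_pow _ _).add_mem_OpLT
    (mulOp_mul_mem_OpLT a (mul_derOp_pow_mem_OpLT j (derOp_pow_mul_mulOp_sub_mem hd b i)))

variable {A B : AddMonoid.End R} {p q : ℕ}

lemma mul_mem_OpLE (hd : IsDeriv d) (hA : A ∈ OpLE d p) (hB : B ∈ OpLE d q) :
    A * B ∈ OpLE d (p + q) := by
  refine map_mem_of_mem_OpLE (AddMonoidHom.mulRight B) (fun a i hi => ?_) hA
  refine map_mem_of_mem_OpLE (AddMonoidHom.mulLeft (mulOp a * derOp d ^ i))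
    (fun b j hj => ?_) hB
  exact OpLE_mono (by omega) (hasLeadingTerm_mulOp_mul_derOp_pow_mul hd a b i j).mem_OpLE

lemma mul_mem_OpLT_left (hd : IsDeriv d) (hA : A ∈ OpLT d p) (hB : B ∈ OpLE d q) :
    A * B ∈ OpLT d (p + q) :=
  map_mem_OpLT (AddMonoidHom.mulRight B) q (fun _ _ hA => mul_mem_OpLE hd hA hB) hA

lemma mul_mem_OpLT_right (hd : IsDeriv d) (hA : A ∈ OpLE d p) (hB : B ∈ OpLT d q) :
    A * B ∈ OpLT d (p + q) := by
  rw [add_comm]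
  exact map_mem_OpLT (AddMonoidHom.mulLeft A) p
    (fun _ _ hB => by rw [add_comm]; exact mul_mem_OpLE hd hA hB) hB

lemma HasLeadingTerm.mul (hd : IsDeriv d) {a b : R} (hA : HasLeadingTerm d A a p)
    (hB : HasLeadingTerm d B b q) : HasLeadingTerm d (A * B) (a * b) (p + q) := by
  have key : A * B = mulOp a * derOp d ^ p * (mulOp b * derOp d ^ q)
      + (mulOp a * derOp d ^ p * (B - mulOp b * derOp d ^ q)
        + (A - mulOp a * derOp d ^ p) * B) := by
    simp only [mul_sub, sub_mul]
    abel
  rw [key]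
  exact (hasLeadingTerm_mulOp_mul_derOp_pow_mul hd a b p q).add_mem_OpLT
    (add_mem (mul_mem_OpLT_right hd (mulOp_mul_derOp_pow_mem_OpLE a le_rfl) hB)
      (mul_mem_OpLT_left hd hA hB.mem_OpLE))

lemma HasLeadingTerm.pow (hd : IsDeriv d) {a : R} (hA : HasLeadingTerm d A a p) (k : ℕ) :
    HasLeadingTerm d (A ^ k) (a ^ k) (p * k) := by
  induction k with
  | zero => simpa using hasLeadingTerm_mulOp_mul_derOp_pow (d := d) 1 0
  | succ k ih =>
    rw [pow_succ, pow_succ, Nat.mul_succ]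
    exact ih.mul hd hA

lemma hasLeadingTerm_sum {s : Finset ℕ} {c : ℕ → R} {X : ℕ → AddMonoid.End R}
    {e : ℕ → ℕ} (he : StrictMonoOn e s) (hX : ∀ j ∈ s, HasLeadingTerm d (X j) 1 (e j))
    {j₀ : ℕ} (hj₀ : j₀ ∈ s) (htop : ∀ j ∈ s, j₀ < j → c j = 0) :
    HasLeadingTerm d (∑ j ∈ s, mulOp (c j) * X j) (c j₀) (e j₀) := by
  rw [← Finset.add_sum_erase s _ hj₀]
  have hlead := (hX j₀ hj₀).mulOp_mul (c j₀)
  rw [mul_one] at hlead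
  refine hlead.add_mem_OpLT (sum_mem fun j hj => ?_)
  obtain ⟨hne, hjs⟩ := Finset.mem_erase.1 hj
  rcases hne.lt_or_gt with hlt | hgt
  · exact OpLE_le_OpLT (he hjs hj₀ hlt) (mulOp_mul_mem_OpLE _ (hX j hjs).mem_OpLE)
  · simp [htop j hjs hgt]

end Products

section PolynomialsInL

variable {d : R →+ R} {L : AddMonoid.End R}

lemma mem_Jset {n m j : ℕ} : j ∈ Jset n m ↔ j ≤ m ∧ ¬ n ∣ j := by
  simp [Jset]

lemma sub_one_lt_of_not_dvd {n j : ℕ} (hj : ¬ n ∣ j) : j - 1 < j :=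
  Nat.sub_one_lt fun h => hj (h ▸ dvd_zero n)

lemma theta_Jset_mem_OpLE {B : ℕ → AddMonoid.End R} {n m : ℕ}
    (hB : ∀ j ∈ Jset n m, B j ∈ OpLE d j) (c : ℕ → R) :
    theta c B (Jset n m) ∈ OpLE d m :=
  sum_mem fun j hj => mulOp_mul_mem_OpLE _ (OpLE_mono (mem_Jset.1 hj).1 (hB j hj))

lemma hasLeadingTerm_of_sub_mem_OpLE {A : AddMonoid.End R} {i j : ℕ} (hij : i < j)
    (h : A - derOp d ^ j ∈ OpLE d i) : HasLeadingTerm d A 1 j := by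
  simpa [HasLeadingTerm] using OpLE_le_OpLT hij h

lemma hasLeadingTerm_of_mem_Jset {B : ℕ → AddMonoid.End R} {n m j : ℕ}
    (hB : ∀ j, ¬ n ∣ j → B j - derOp d ^ j ∈ OpLE d (j - 1)) (hj : j ∈ Jset n m) :
    HasLeadingTerm d (B j) 1 j := by
  have hj' := (mem_Jset.1 hj).2
  exact hasLeadingTerm_of_sub_mem_OpLE (sub_one_lt_of_not_dvd hj') (hB j hj')

lemma zero_mem_CPoly : (0 : AddMonoid.End R) ∈ CPoly d L :=
  ⟨0, by simp, by simp⟩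

lemma mem_CPoly_iff {P : AddMonoid.End R} : P ∈ CPoly d L ↔
    ∃ p : Polynomial R, (∀ k, d (p.coeff k) = 0) ∧ P = p.sum fun i a => mulOp a * L ^ i := by
  have hsum (p : Polynomial R) : p.sum (fun i a => mulOp a * L ^ i)
      = ∑ i ∈ Finset.range (p.natDegree + 1), mulOp (p.coeff i) * L ^ i :=
    Polynomial.sum_over_range p (by simp)
  simp only [CPoly, Set.mem_ofPred_eq, hsum]

lemma add_mem_CPoly {P Q : AddMonoid.End R} (hP : P ∈ CPoly d L) (hQ : Q ∈ CPoly d L) :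
    P + Q ∈ CPoly d L := by
  obtain ⟨p, hp, rfl⟩ := mem_CPoly_iff.1 hP
  obtain ⟨q, hq, rfl⟩ := mem_CPoly_iff.1 hQ
  refine mem_CPoly_iff.2 ⟨p + q, fun k => by simp [hp k, hq k], ?_⟩
  rw [Polynomial.sum_add_index _ _ _ (by simp) fun i a b => by rw [mulOp_add, add_mul]]

lemma mulOp_mul_pow_mem_CPoly {α : R} (hα : d α = 0) (k : ℕ) :
    mulOp α * L ^ k ∈ CPoly d L := by
  refine mem_CPoly_iff.2 ⟨Polynomial.monomial k α, fun i => ?_, by simp⟩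
  rw [Polynomial.coeff_monomial]
  split_ifs <;> simp [hα]

lemma sum_mem_CPoly {s : Finset ℕ} {c : ℕ → R} (hc : ∀ j ∈ s, d (c j) = 0)
    (e : ℕ → ℕ) :
    ∑ j ∈ s, mulOp (c j) * L ^ e j ∈ CPoly d L :=
  Finset.sum_induction _ (· ∈ CPoly d L) (fun _ _ => add_mem_CPoly) zero_mem_CPoly
    fun j hj => mulOp_mul_pow_mem_CPoly (hc j hj) (e j)

lemma hasLeadingTerm_sum_coeff_mul_pow (hd : IsDeriv d) {n : ℕ} (hn : 1 ≤ n)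
    (hL : HasLeadingTerm d L 1 n) (p : Polynomial R) :
    HasLeadingTerm d (∑ i ∈ Finset.range (p.natDegree + 1), mulOp (p.coeff i) * L ^ i)
      p.leadingCoeff (n * p.natDegree) :=
  hasLeadingTerm_sum (fun _ _ _ _ h => Nat.mul_lt_mul_of_pos_left h hn)
    (fun i _ => by simpa using hL.pow hd i) (by simp) (fun i hi hlt => by rw [Finset.mem_range] at hi; omega)

variable (L) in
/-- The paper's `B_j = (L^{j/n})_+` is `L^{j/n}` itself when `n ∣ j`. -/
def almostCommBasis (B : ℕ → AddMonoid.End R) (n j : ℕ) : AddMonoid.End R :=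
  if n ∣ j then L ^ (j / n) else B j

variable {B : ℕ → AddMonoid.End R} {n : ℕ}

lemma hasLeadingTerm_almostCommBasis (hd : IsDeriv d) (hn : 1 ≤ n)
    (hL : HasLeadingTerm d L 1 n) (hB : ∀ j, ¬ n ∣ j → B j - derOp d ^ j ∈ OpLE d (j - 1))
    (j : ℕ) : HasLeadingTerm d (almostCommBasis L B n j) 1 j := by
  unfold almostCommBasis
  split_ifs with hj
  · obtain ⟨i, rfl⟩ := hj
    rw [Nat.mul_div_cancel_left i (by omega)]
    simpa using hL.pow hd i
  · exact hasLeadingTerm_of_sub_mem_OpLE (sub_one_lt_of_not_dvd hj) (hB j hj)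

lemma commutator_almostCommBasis_mem (hn : 1 ≤ n)
    (hB : ∀ j, ¬ n ∣ j → L * B j - B j * L ∈ OpLE d (n - 2)) (j : ℕ) :
    L * almostCommBasis L B n j - almostCommBasis L B n j * L ∈ OpLT d (n - 1) := by
  unfold almostCommBasis
  split_ifs with hj
  · simp [(Commute.self_pow L _).eq]
  · have hn2 : 2 ≤ n := by
      by_contra h
      exact hj (by interval_cases n; exact one_dvd j)
    rw [OpLT_eq_OpLE_sub_one (by omega)]
    exact hB j hj

end PolynomialsInL

section CommRing

variable {K : Type} [CommRing K] {d : K →+ K}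

lemma mulOp_commute (a b : K) : Commute (mulOp a) (mulOp b) := by
  rw [Commute, SemiconjBy, ← mulOp_mul, ← mulOp_mul, mul_comm]

lemma commute_mulOp_of_map_eq_zero (hd : IsDeriv d) {c : K} (hc : d c = 0) {k : ℕ}
    {A : AddMonoid.End K} (hA : A ∈ OpLE d k) : Commute (mulOp c) A := by
  have hder : Commute (mulOp c) (derOp d) := by
    simp [Commute, SemiconjBy, derOp_mul_mulOp hd, hc]
  have h := map_mem_of_mem_OpLE (H := ⊥)
    (AddMonoidHom.mulLeft (mulOp c) - AddMonoidHom.mulRight (mulOp c))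
    (fun a i _ => by
      simpa [sub_eq_zero] using ((mulOp_commute c a).mul_right (hder.pow_right i)).eq) hA
  exact sub_eq_zero.1 (by simpa using h)

lemma commute_of_mem_CPoly (hd : IsDeriv d) {L P : AddMonoid.End K} (hL : IsOp d L)
    (hP : P ∈ CPoly d L) : Commute L P := by
  obtain ⟨p, hp, rfl⟩ := hP
  obtain ⟨k, hk⟩ := hL
  exact Commute.sum_right _ _ _ fun i _ =>
    (commute_mulOp_of_map_eq_zero hd (hp i) hk).symm.mul_right (Commute.self_pow L i)

lemma commutator_mem_OpLT (hd : IsDeriv d) {A B : AddMonoid.End K} {p q : ℕ}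
    (hA : A ∈ OpLE d p) (hB : B ∈ OpLE d q) : A * B - B * A ∈ OpLT d (p + q) := by
  refine map_mem_of_mem_OpLE (AddMonoidHom.mulRight B - AddMonoidHom.mulLeft B)
    (fun a i hi => ?_) hA
  refine map_mem_of_mem_OpLE (AddMonoidHom.mulLeft (mulOp a * derOp d ^ i)
    - AddMonoidHom.mulRight (mulOp a * derOp d ^ i)) (fun b j hj => ?_) hB
  have hab := hasLeadingTerm_mulOp_mul_derOp_pow_mul hd a b i j
  have hba := hasLeadingTerm_mulOp_mul_derOp_pow_mul hd b a j i
  rw [mul_comm b a, add_comm j i] at hba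
  simpa using OpLT_mono (by omega) (hab.sub_mem_OpLT hba)

lemma HasLeadingTerm.commutator (hd : IsDeriv d) {L : AddMonoid.End K} {n : ℕ} (hn : 1 ≤ n)
    (hnf : L - derOp d ^ n ∈ OpLE d (n - 2)) {Q : AddMonoid.End K} {α : K} {m : ℕ}
    (hQ : HasLeadingTerm d Q α m) :
    HasLeadingTerm d (L * Q - Q * L) (n * d α) (m + n - 1) := by
  obtain ⟨k, rfl⟩ := Nat.exists_eq_add_of_le' hn
  set N := L - derOp d ^ (k + 1)
  set S := Q - mulOp α * derOp d ^ m
  have key : L * Q - Q * L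
      = (derOp d ^ (k + 1) * mulOp α - mulOp α * derOp d ^ (k + 1)) * derOp d ^ m
        + ((derOp d ^ (k + 1) * S - S * derOp d ^ (k + 1)) + (N * Q - Q * N)) := by
    simp only [N, S, mul_sub, sub_mul, mul_assoc, ← pow_add, Nat.add_comm m]
    abel
  have hS : derOp d ^ (k + 1) * S - S * derOp d ^ (k + 1) ∈ OpLT d (k + m) := by
    cases m with
    | zero =>
      have hS : S ∈ OpLT d 0 := hQ
      simp_all
    | succ m =>
      exact OpLT_mono (by omega) (commutator_mem_OpLT hd (derOp_pow_mem_OpLE (k + 1)) hQ)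
  have hN : N * Q - Q * N ∈ OpLT d (k + m) :=
    OpLT_mono (by omega) (commutator_mem_OpLT hd hnf hQ.mem_OpLE)
  rw [key, show m + (k + 1) - 1 = k + m by omega]
  push_cast
  exact ((hasLeadingTerm_derOp_pow_mul_mulOp_sub hd α k).mul_derOp_pow m).add_mem_OpLT
    (add_mem hS hN)

variable [NoZeroDivisors K] [CharZero K]

lemma eq_zero_of_mulOp_mul_derOp_pow_mem_OpLT (hd : IsDeriv d) (hd0 : d ≠ 0) {a : K} {k : ℕ}
    (h : mulOp a * derOp d ^ k ∈ OpLT d k) : a = 0 := by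
  induction k generalizing a with
  | zero => exact mulOp_injective (by simpa using h)
  | succ k ih =>
    obtain ⟨b, hb⟩ : ∃ b, d b ≠ 0 := DFunLike.ne_iff.1 hd0
    have hcomm := commutator_mem_OpLT hd h (mulOp_mem_OpLE (d := d) b 0)
    have hlead := (hasLeadingTerm_derOp_pow_mul_mulOp_sub hd b k).mulOp_mul a
    have hX : mulOp a * derOp d ^ (k + 1) * mulOp b - mulOp b * (mulOp a * derOp d ^ (k + 1))
        = mulOp a * (derOp d ^ (k + 1) * mulOp b - mulOp b * derOp d ^ (k + 1)) := by
      simp only [mul_sub, ← mul_assoc, (mulOp_commute b a).eq]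
    rw [hX, add_zero] at hcomm
    have hcoeff := ih (by simpa using sub_mem hcomm hlead)
    simpa [hb, Nat.cast_add_one_ne_zero] using hcoeff

namespace HasLeadingTerm

variable {A : AddMonoid.End K} {a b : K} {p q : ℕ}

lemma eq_zero_of_mem_OpLT (hd : IsDeriv d) (hd0 : d ≠ 0) (h : HasLeadingTerm d A a p)
    (hA : A ∈ OpLT d p) : a = 0 :=
  eq_zero_of_mulOp_mul_derOp_pow_mem_OpLT hd hd0 (by simpa using sub_mem hA h)

lemma order_eq (hd : IsDeriv d) (hd0 : d ≠ 0) (ha : HasLeadingTerm d A a p)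
    (hb : HasLeadingTerm d A b q) (ha0 : a ≠ 0) (hb0 : b ≠ 0) : p = q := by
  rcases lt_trichotomy p q with h | h | h
  · exact absurd (hb.eq_zero_of_mem_OpLT hd hd0 (OpLE_le_OpLT h ha.mem_OpLE)) hb0
  · exact h
  · exact absurd (ha.eq_zero_of_mem_OpLT hd hd0 (OpLE_le_OpLT h hb.mem_OpLE)) ha0

end HasLeadingTerm

end CommRing

section NormalForm

variable {K : Type} [CommRing K] [NoZeroDivisors K] [CharZero K] {d : K →+ K}
  {L : AddMonoid.End K} {n : ℕ} {B : ℕ → AddMonoid.End K}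

lemma HasLeadingTerm.map_eq_zero_of_commutator_mem (hd : IsDeriv d) (hd0 : d ≠ 0) (hn : 1 ≤ n)
    (hnf : L - derOp d ^ n ∈ OpLE d (n - 2)) {Q : AddMonoid.End K} {α : K} {m : ℕ}
    (hQ : HasLeadingTerm d Q α m) (hcomm : L * Q - Q * L ∈ OpLT d (n - 1)) : d α = 0 := by
  have h := (hQ.commutator hd hn hnf).eq_zero_of_mem_OpLT hd hd0 (OpLT_mono (by omega) hcomm)
  simpa [show n ≠ 0 by omega] using h

lemma exists_eq_sum_almostCommBasis (hd : IsDeriv d) (hd0 : d ≠ 0) (hn : 1 ≤ n)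
    (hnf : L - derOp d ^ n ∈ OpLE d (n - 2))
    (hB₁ : ∀ j, ¬ n ∣ j → B j - derOp d ^ j ∈ OpLE d (j - 1))
    (hB₂ : ∀ j, ¬ n ∣ j → L * B j - B j * L ∈ OpLE d (n - 2))
    {m : ℕ} {Q : AddMonoid.End K} (hQ : Q ∈ OpLT d m)
    (hcomm : L * Q - Q * L ∈ OpLT d (n - 1)) :
    ∃ c : ℕ → K, (∀ j, d (c j) = 0) ∧
      Q = ∑ j ∈ Finset.range m, mulOp (c j) * almostCommBasis L B n j := by
  induction m generalizing Q with
  | zero => exact ⟨0, fun _ => map_zero d, by simpa using hQ⟩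
  | succ m ih =>
    have hL : HasLeadingTerm d L 1 n := hasLeadingTerm_of_sub_mem_OpLE (by omega) hnf
    set E := almostCommBasis L B n m
    obtain ⟨α, hα⟩ := exists_hasLeadingTerm hQ
    have hαc : d α = 0 := hα.map_eq_zero_of_commutator_mem hd hd0 hn hnf hcomm
    have hαL : Commute (mulOp α) L := commute_mulOp_of_map_eq_zero hd hαc hL.mem_OpLE
    have hE := hasLeadingTerm_almostCommBasis hd hn hL hB₁ m
    have hcomm' : L * (Q - mulOp α * E) - (Q - mulOp α * E) * L
        = (L * Q - Q * L) - mulOp α * (L * E - E * L) := by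
      rw [mul_sub, sub_mul, ← mul_assoc, ← hαL.eq, mul_assoc, mul_assoc, mul_sub]
      abel
    obtain ⟨c, hc, hQc⟩ := ih (Q := Q - mulOp α * E)
      (hα.sub_mem_OpLT (by simpa using hE.mulOp_mul α))
      (hcomm' ▸ sub_mem hcomm (mulOp_mul_mem_OpLT α (commutator_almostCommBasis_mem hn hB₂ m)))
    refine ⟨Function.update c m α, fun j => ?_, ?_⟩
    · rw [Function.update_apply]
      split_ifs <;> simp [hαc, hc]
    · rw [Finset.sum_range_succ, Function.update_self, Finset.sum_congr rfl fun j hj =>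
        by rw [Function.update_of_ne (Finset.mem_range.1 hj).ne], ← hQc]
      exact (sub_add_cancel Q _).symm

theorem exists_mem_VmSet_sub_theta_mem_CPoly (hd : IsDeriv d) (hd0 : d ≠ 0) (hn : 1 ≤ n)
    (hnf : L - derOp d ^ n ∈ OpLE d (n - 2))
    (hB₁ : ∀ j, ¬ n ∣ j → B j - derOp d ^ j ∈ OpLE d (j - 1))
    (hB₂ : ∀ j, ¬ n ∣ j → L * B j - B j * L ∈ OpLE d (n - 2))
    {m : ℕ} {Q : AddMonoid.End K} (hQ : Q ∈ Cent d L) (hQm : Q ∈ OpLE d m) :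
    ∃ c ∈ VmSet d L B n m, Q - theta c B (Jset n m) ∈ CPoly d L := by
  have hL : HasLeadingTerm d L 1 n := hasLeadingTerm_of_sub_mem_OpLE (by omega) hnf
  obtain ⟨c, hc, hQc⟩ := exists_eq_sum_almostCommBasis hd hd0 hn hnf hB₁ hB₂
    (m := m + 1) hQm (by simp [hQ.2])
  set c' : ℕ → K := fun j => if j ∈ Jset n m then c j else 0
  have hθ : theta c' B (Jset n m)
      = ∑ j ∈ Jset n m, mulOp (c j) * almostCommBasis L B n j :=
    Finset.sum_congr rfl fun j hj => by simp [c', hj, almostCommBasis, (mem_Jset.1 hj).2]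
  have hP : Q - theta c' B (Jset n m)
      = ∑ j ∈ Finset.range (m + 1) with n ∣ j, mulOp (c j) * L ^ (j / n) := by
    rw [hθ, hQc, ← Finset.sum_filter_add_sum_filter_not (Finset.range (m + 1)) (n ∣ ·)]
    refine (add_sub_cancel_right _ _).trans (Finset.sum_congr rfl fun j hj => ?_)
    simp [almostCommBasis, (Finset.mem_filter.1 hj).2]
  have hPmem : Q - theta c' B (Jset n m) ∈ CPoly d L := hP ▸ sum_mem_CPoly (fun j _ => hc j) _
  refine ⟨c', ⟨fun j => ?_, fun j hj => if_neg hj, ⟨m, ?_⟩, ?_⟩, hPmem⟩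
  · simp only [c']
    split_ifs <;> simp [hc]
  · exact theta_Jset_mem_OpLE (fun j hj => (hasLeadingTerm_of_mem_Jset hB₁ hj).mem_OpLE) c'
  · have := Commute.sub_right hQ.2 (commute_of_mem_CPoly hd ⟨n, hL.mem_OpLE⟩ hPmem)
    rwa [sub_sub_cancel] at this

theorem eq_zero_of_theta_mem_CPoly (hd : IsDeriv d) (hd0 : d ≠ 0) (hn : 1 ≤ n)
    (hnf : L - derOp d ^ n ∈ OpLE d (n - 2))
    (hB : ∀ j, ¬ n ∣ j → B j - derOp d ^ j ∈ OpLE d (j - 1))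
    {m : ℕ} {c : ℕ → K} (hc : ∀ j ∉ Jset n m, c j = 0)
    (hθ : theta c B (Jset n m) ∈ CPoly d L) (j : ℕ) : c j = 0 := by
  by_contra hj
  have hjJ : j ∈ Jset n m := by_contra fun h => hj (hc j h)
  obtain ⟨j₀, hj₀, hmax⟩ := Finset.exists_max_image ((Jset n m).filter (c · ≠ 0)) id
    ⟨j, Finset.mem_filter.2 ⟨hjJ, hj⟩⟩
  obtain ⟨hj₀J, hcj₀⟩ := Finset.mem_filter.1 hj₀
  have hθlead : HasLeadingTerm d (theta c B (Jset n m)) (c j₀) j₀ :=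
    hasLeadingTerm_sum strictMonoOn_id (fun j hj => hasLeadingTerm_of_mem_Jset hB hj) hj₀J
      (fun j hj hlt => by_contra fun h => (hmax j (Finset.mem_filter.2 ⟨hj, h⟩)).not_gt hlt)
  obtain ⟨p, -, hp⟩ := hθ
  by_cases hp0 : p = 0
  · subst hp0
    exact hcj₀ (hθlead.eq_zero_of_mem_OpLT hd hd0 (by simp [hp]))
  · have hL : HasLeadingTerm d L 1 n := hasLeadingTerm_of_sub_mem_OpLE (by omega) hnf
    have hPlead := hasLeadingTerm_sum_coeff_mul_pow hd hn hL p
    rw [← hp] at hPlead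
    have := hθlead.order_eq hd hd0 hPlead hcj₀ (Polynomial.leadingCoeff_ne_zero.2 hp0)
    exact (mem_Jset.1 hj₀J).2 ⟨_, this⟩

end NormalForm

/-- For every `m`, the map `c ↦ ∑_{j ∈ J_{n,m}} c_j B_j` gives an
isomorphism of `C`-vector spaces `V_m ≅ Z_m(L) / C_m[L]`: it maps `V_m` into
`Z_m(L)`, is surjective onto `Z_m(L)` modulo `C_m[L]`, and is injective modulo
`C_m[L]`. -/
theorem vm_iso_centralizer_quotient {F : Type} [Field F] [CharZero F]
    (d : F →+ F) (hd : IsDeriv d) (L : AddMonoid.End F) (n : ℕ) (hn : 1 ≤ n)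
    (hL : MonicOrd d L n)
    (hnf : L - derOp d ^ n ∈ OpLE d (n - 2))
    (B : ℕ → AddMonoid.End F)
    (hB : ∀ j, B j ∈ OpLE d j ∧ B j - derOp d ^ j ∈ OpLE d (j - 1) ∧
      L * B j - B j * L ∈ OpLE d (n - 2))
    (m : ℕ) :
    (∀ c ∈ VmSet d L B n m,
       theta c B (Jset n m) ∈ Cent d L ∧ theta c B (Jset n m) ∈ OpLE d m) ∧
    (∀ Q ∈ Cent d L, Q ∈ OpLE d m → ∃ c ∈ VmSet d L B n m,
       Q - theta c B (Jset n m) ∈ CPoly d L ∧ Q - theta c B (Jset n m) ∈ OpLE d m) ∧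
    (∀ c ∈ VmSet d L B n m, theta c B (Jset n m) ∈ CPoly d L → ∀ j, c j = 0) := by
  have hd0 : d ≠ 0 := ne_zero_of_monicOrd hn hL
  have hB₁ : ∀ j, ¬ n ∣ j → B j - derOp d ^ j ∈ OpLE d (j - 1) := fun j _ => (hB j).2.1
  have hB₂ : ∀ j, ¬ n ∣ j → L * B j - B j * L ∈ OpLE d (n - 2) := fun j _ => (hB j).2.2
  have hθ (c : ℕ → F) : theta c B (Jset n m) ∈ OpLE d m :=
    theta_Jset_mem_OpLE (fun j _ => (hB j).1) c
  refine ⟨fun c hc => ⟨hc.2.2, hθ c⟩, fun Q hQ hQm => ?_,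
    fun c hc hcP => eq_zero_of_theta_mem_CPoly hd hd0 hn hnf hB₁ hc.2.1 hcP⟩
  obtain ⟨c, hc, hP⟩ := exists_mem_VmSet_sub_theta_mem_CPoly hd hd0 hn hnf hB₁ hB₂ hQ hQm
  exact ⟨c, hc, hP, sub_mem hQm (hθ c)⟩
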